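/- arXiv:1608.03009 — 2 statements merged into one kernel-verified Lean document; each statement's English description precedes it below -/
import Mathlib

section
/- Let H be a normal subgroup of G, let π : X → X/H be the quotient map for the restricted H-action, and consider the induced action of G/H on X/H. Then π(W_G(X)) ⊆ W_{G/H}(X/H). -/
open Pointwise

def IsWandering (G : Type*) {X : Type*} [Group G] [MulAction G X] [TopologicalSpace X]
    (U : Set X) : Prop :=
  IsOpen U ∧ ∀ g : G, g ≠ 1 → (g • U) ∩ U = ∅

def wanderingDomain (G : Type*) (X : Type*) [Group G] [MulAction G X] [TopologicalSpace X] :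
    Set X :=
  ⋃₀ {U : Set X | IsWandering G U}

/-- The orbit space `X/H` of the restricted action of a subgroup `H ≤ G`. -/
abbrev OrbitQuot {G : Type*} [Group G] (H : Subgroup G) (X : Type*) [MulAction G X] :=
  Quotient (MulAction.orbitRel H X)


/-! If `U` is `G`-wandering, `π(U)` is open since quotient maps by group actions are open, and it is
`G/H`-wandering: if `gH • π(U)` meets `π(U)` then `(h * g) • U` meets `U` for some `h ∈ H`, so
`h * g = 1` and `g ∈ H`. -/

section Algebra

variable {G X : Type*} [Group G] [MulAction G X]

theorem exists_smul_inter_nonempty_of_image_mk_inter_nonempty {H : Subgroup G} {U V : Set X}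
    (h : (Quotient.mk (MulAction.orbitRel H X) '' V ∩ Quotient.mk _ '' U).Nonempty) :
    ∃ k : H, (k • V ∩ U).Nonempty := by
  obtain ⟨_, ⟨v, hv, rfl⟩, u, hu, huv⟩ := h
  obtain ⟨k, rfl⟩ := Quotient.exact huv
  exact ⟨k, k • v, Set.smul_mem_smul_set hv, hu⟩

theorem smul_image_mk {H : Subgroup G} [H.Normal] [MulAction (G ⧸ H) (OrbitQuot H X)]
    (hcompat : ∀ (g : G) (x : X),
      ((g : G ⧸ H) • (Quotient.mk (MulAction.orbitRel H X) x) : OrbitQuot H X) =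
        Quotient.mk (MulAction.orbitRel H X) (g • x))
    (g : G) (U : Set X) :
    (g : G ⧸ H) • Quotient.mk (MulAction.orbitRel H X) '' U =
      Quotient.mk (MulAction.orbitRel H X) '' (g • U) := by
  simp only [← Set.image_smul, Set.image_image, hcompat]

end Algebra

section Topology

variable {G X : Type*} [Group G] [TopologicalSpace X] [MulAction G X]

instance Subgroup.continuousConstSMul [ContinuousConstSMul G X] (H : Subgroup G) :
    ContinuousConstSMul H X :=
  ⟨fun h => continuous_const_smul (h : G)⟩

theorem IsWandering.eq_one_of_smul_inter_nonempty {U : Set X} (hU : IsWandering G U) {g : G}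
    (hg : (g • U ∩ U).Nonempty) : g = 1 := by
  by_contra hne
  exact hg.ne_empty (hU.2 g hne)

theorem IsWandering.image_mk [ContinuousConstSMul G X] {H : Subgroup G} [H.Normal]
    [MulAction (G ⧸ H) (OrbitQuot H X)]
    (hcompat : ∀ (g : G) (x : X),
      ((g : G ⧸ H) • (Quotient.mk (MulAction.orbitRel H X) x) : OrbitQuot H X) =
        Quotient.mk (MulAction.orbitRel H X) (g • x))
    {U : Set X} (hU : IsWandering G U) :
    IsWandering (G ⧸ H) (Quotient.mk (MulAction.orbitRel H X) '' U) := by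
  refine ⟨MulAction.isOpenQuotientMap_quotientMk.isOpenMap U hU.1, fun q hq => ?_⟩
  obtain ⟨g, rfl⟩ := QuotientGroup.mk_surjective q
  rw [smul_image_mk hcompat, ← Set.not_nonempty_iff_eq_empty]
  intro hmeet
  obtain ⟨k, hk⟩ := exists_smul_inter_nonempty_of_image_mk_inter_nonempty hmeet
  have hkg : (k : G) * g = 1 := hU.eq_one_of_smul_inter_nonempty (by rwa [mul_smul])
  exact hq ((QuotientGroup.eq_one_iff g).2 (eq_inv_of_mul_eq_one_right hkg ▸ inv_mem k.2))

end Topology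

theorem image_wandering_subset_quotient_wandering_general
    {G X : Type*} [Group G] [TopologicalSpace X] [MulAction G X]
    (hc : ∀ g : G, Continuous fun x : X => g • x)
    (H : Subgroup G) [H.Normal]
    [MulAction (G ⧸ H) (OrbitQuot H X)]
    (hcompat : ∀ (g : G) (x : X),
      ((g : G ⧸ H) • (Quotient.mk (MulAction.orbitRel H X) x) : OrbitQuot H X) =
        Quotient.mk (MulAction.orbitRel H X) (g • x)) :
    (fun x : X => Quotient.mk (MulAction.orbitRel H X) x) '' wanderingDomain G X ⊆
      wanderingDomain (G ⧸ H) (OrbitQuot H X) := by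
  have : ContinuousConstSMul G X := ⟨hc⟩
  rintro _ ⟨x, ⟨U, hU, hxU⟩, rfl⟩
  exact ⟨_, hU.image_mk hcompat, x, hxU, rfl⟩

theorem image_wandering_subset_quotient_wandering
    {G X : Type*} [Group G] [TopologicalSpace X] [MulAction G X]
    (hc : ∀ g : G, Continuous fun x : X => g • x)
    (H : Subgroup G) [H.Normal]
    [MulAction (G ⧸ H) (OrbitQuot H X)]
    (hcompat : ∀ (g : G) (x : X),
      ((g : G ⧸ H) • (Quotient.mk (MulAction.orbitRel H X) x) : OrbitQuot H X) =
        Quotient.mk (MulAction.orbitRel H X) (g • x))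
    (hc' : ∀ q : G ⧸ H, Continuous fun y : OrbitQuot H X => q • y) :
    (fun x : X => Quotient.mk (MulAction.orbitRel H X) x) '' wanderingDomain G X ⊆
      wanderingDomain (G ⧸ H) (OrbitQuot H X) :=
  image_wandering_subset_quotient_wandering_general hc H hcompat
end

section
/- With the notation of the quotient setting, if W_H(X) = X (i.e., every point of X has an H-wandering neighborhood), then π(W_G(X)) = W_{G/H}(X/H). -/
open Pointwise

/-!
A `G`-wandering set `U` maps to a `G/H`-wandering set: if `gH` moved a point `Hu` of `π U` back
into `π U`, then `h g u ∈ U` for some `h ∈ H`, and `h g ≠ 1` because `g ∉ H`. The image is open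
since `π` is an open map. Conversely, if `Hx` has a `G/H`-wandering neighbourhood `V` and `x` an
`H`-wandering neighbourhood `U`, then `π⁻¹ V ∩ U` is `G`-wandering: elements outside `H` are
excluded by `V`, nontrivial elements of `H` by `U`.
-/

section Wandering

variable {G X : Type*} [Group G] [TopologicalSpace X] [MulAction G X]

theorem isWandering_iff {U : Set X} :
    IsWandering G U ↔ IsOpen U ∧ ∀ g : G, g ≠ 1 → ∀ x ∈ U, g • x ∉ U := by
  simp only [IsWandering, Set.eq_empty_iff_forall_notMem, Set.mem_inter_iff, Set.mem_smul_set]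
  refine and_congr_right fun _ => forall₂_congr fun g _ => ?_
  constructor
  · exact fun h x hx hgx => h _ ⟨⟨x, hx, rfl⟩, hgx⟩
  · rintro h _ ⟨⟨x, hx, rfl⟩, hgx⟩
    exact h x hx hgx

theorem mem_wanderingDomain_iff {x : X} :
    x ∈ wanderingDomain G X ↔ ∃ U : Set X, IsWandering G U ∧ x ∈ U :=
  Set.mem_sUnion

end Wandering

section Quotient

variable {G X : Type*} [Group G] [TopologicalSpace X] [MulAction G X]
  {H : Subgroup G} [H.Normal] [MulAction (G ⧸ H) (OrbitQuot H X)]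

theorem IsWandering.image_quotientMk [ContinuousConstSMul H X]
    (hcompat : ∀ (g : G) (x : X),
      ((g : G ⧸ H) • Quotient.mk (MulAction.orbitRel H X) x : OrbitQuot H X) =
        Quotient.mk (MulAction.orbitRel H X) (g • x))
    {U : Set X} (hU : IsWandering G U) :
    IsWandering (G ⧸ H) (Quotient.mk (MulAction.orbitRel H X) '' U) := by
  rw [isWandering_iff] at hU ⊢
  refine ⟨MulAction.isOpenQuotientMap_quotientMk.isOpenMap U hU.1, ?_⟩
  rintro q hq _ ⟨u, hu, rfl⟩ ⟨v, hv, hv_eq⟩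
  obtain ⟨g, rfl⟩ := QuotientGroup.mk_surjective q
  rw [hcompat] at hv_eq
  obtain ⟨h, rfl⟩ := Quotient.exact hv_eq
  have hg : g ∉ H := by simpa [QuotientGroup.eq_one_iff] using hq
  have hhg : (h : G) * g ≠ 1 := fun h_eq =>
    hg (inv_eq_of_mul_eq_one_right h_eq ▸ H.inv_mem h.2)
  exact hU.2 _ hhg u hu (by rwa [mul_smul, ← Subgroup.smul_def])

theorem IsWandering.preimage_quotientMk_inter
    (hcompat : ∀ (g : G) (x : X),
      ((g : G ⧸ H) • Quotient.mk (MulAction.orbitRel H X) x : OrbitQuot H X) =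
        Quotient.mk (MulAction.orbitRel H X) (g • x))
    {V : Set (OrbitQuot H X)} (hV : IsWandering (G ⧸ H) V) {U : Set X} (hU : IsWandering H U) :
    IsWandering G (Quotient.mk (MulAction.orbitRel H X) ⁻¹' V ∩ U) := by
  rw [isWandering_iff] at hU hV ⊢
  refine ⟨(hV.1.preimage continuous_quot_mk).inter hU.1, ?_⟩
  rintro g hg x ⟨hxV, hxU⟩ ⟨hgxV, hgxU⟩
  by_cases hgH : g ∈ H
  · exact hU.2 ⟨g, hgH⟩ (by simpa [Subtype.ext_iff] using hg) x hxU hgxU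
  · refine hV.2 g (by simpa [QuotientGroup.eq_one_iff] using hgH) _ hxV ?_
    rwa [hcompat]

end Quotient

theorem image_wandering_eq_quotient_wandering_general
    {G X : Type*} [Group G] [TopologicalSpace X] [MulAction G X]
    (hc : ∀ g : G, Continuous fun x : X => g • x)
    (H : Subgroup G) [H.Normal]
    [MulAction (G ⧸ H) (OrbitQuot H X)]
    (hcompat : ∀ (g : G) (x : X),
      ((g : G ⧸ H) • (Quotient.mk (MulAction.orbitRel H X) x) : OrbitQuot H X) =
        Quotient.mk (MulAction.orbitRel H X) (g • x))
    (hH : wanderingDomain H X = Set.univ) :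
    (fun x : X => Quotient.mk (MulAction.orbitRel H X) x) '' wanderingDomain G X =
      wanderingDomain (G ⧸ H) (OrbitQuot H X) := by
  have : ContinuousConstSMul H X := ⟨fun h => hc h⟩
  apply Set.Subset.antisymm
  · rintro _ ⟨x, hx, rfl⟩
    obtain ⟨U, hU, hxU⟩ := mem_wanderingDomain_iff.mp hx
    exact mem_wanderingDomain_iff.mpr ⟨_, hU.image_quotientMk hcompat, x, hxU, rfl⟩
  · intro y hy
    obtain ⟨V, hV, hyV⟩ := mem_wanderingDomain_iff.mp hy
    obtain ⟨x, rfl⟩ := Quotient.exists_rep y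
    obtain ⟨U, hU, hxU⟩ := mem_wanderingDomain_iff.mp (hH ▸ Set.mem_univ x)
    exact ⟨x, mem_wanderingDomain_iff.mpr ⟨_, hV.preimage_quotientMk_inter hcompat hU, hyV, hxU⟩,
      rfl⟩

theorem image_wandering_eq_quotient_wandering
    {G X : Type*} [Group G] [TopologicalSpace X] [MulAction G X]
    (hc : ∀ g : G, Continuous fun x : X => g • x)
    (H : Subgroup G) [H.Normal]
    [MulAction (G ⧸ H) (OrbitQuot H X)]
    (hcompat : ∀ (g : G) (x : X),
      ((g : G ⧸ H) • (Quotient.mk (MulAction.orbitRel H X) x) : OrbitQuot H X) =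
        Quotient.mk (MulAction.orbitRel H X) (g • x))
    (hc' : ∀ q : G ⧸ H, Continuous fun y : OrbitQuot H X => q • y)
    (hH : wanderingDomain H X = Set.univ) :
    (fun x : X => Quotient.mk (MulAction.orbitRel H X) x) '' wanderingDomain G X =
      wanderingDomain (G ⧸ H) (OrbitQuot H X) :=
  image_wandering_eq_quotient_wandering_general hc H hcompat hH
end
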